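/- arXiv:1710.11370 — 9 statements merged into one kernel-verified Lean document; each statement's English description precedes it below -/
import Mathlib

section
/- Let a, b, m be positive natural numbers. If d1 = gcd(a, b) and d2 = gcd(a^m, Σ_{i=0}^{m} a^{m-i} * b^i), then d2 = d1^m. -/
lemma coprime_homogeneous_sum (a b m : ℕ) (h : Nat.Coprime a b) :
    Nat.Coprime (a ^ m) (∑ i ∈ Finset.range (m + 1), a ^ (m - i) * b ^ i) := by
  apply Nat.Coprime.pow_left
  have hsum : (∑ i ∈ Finset.range (m + 1), a ^ (m - i) * b ^ i)
      = b ^ m + a * ∑ i ∈ Finset.range m, a ^ (m - 1 - i) * b ^ i := by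
    rw [Finset.sum_range_succ, Finset.mul_sum]
    simp only [Nat.sub_self, pow_zero, one_mul]
    rw [add_comm]
    congr 1
    apply Finset.sum_congr rfl
    intro i hi
    rw [Finset.mem_range] at hi
    rw [← mul_assoc, ← pow_succ']
    congr 2
    omega
  rw [hsum]
  exact (Nat.coprime_add_mul_left_right a (b ^ m) _).mpr (h.pow_right m)

theorem gcd_pow_homogeneous_sum (a b m : ℕ) (ha : 0 < a) (hb : 0 < b) (hm : 0 < m)
    (d1 d2 : ℕ) (hd1 : d1 = Nat.gcd a b)
    (hd2 : d2 = Nat.gcd (a ^ m) (∑ i ∈ Finset.range (m + 1), a ^ (m - i) * b ^ i)) :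
    d2 = d1 ^ m := by
  subst hd1 hd2
  obtain ⟨a', b', hco, ha', hb'⟩ := Nat.exists_coprime a b
  set d := Nat.gcd a b with hd
  have hsum : (∑ i ∈ Finset.range (m + 1), a ^ (m - i) * b ^ i)
      = (∑ i ∈ Finset.range (m + 1), a' ^ (m - i) * b' ^ i) * d ^ m := by
    rw [Finset.sum_mul]
    apply Finset.sum_congr rfl
    intro i hi
    rw [Finset.mem_range] at hi
    rw [ha', hb', mul_pow, mul_pow]
    have : d ^ (m - i) * d ^ i = d ^ m := by
      rw [← pow_add]; congr 1; omega
    calc a' ^ (m - i) * d ^ (m - i) * (b' ^ i * d ^ i)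
        = a' ^ (m - i) * b' ^ i * (d ^ (m - i) * d ^ i) := by ring
      _ = a' ^ (m - i) * b' ^ i * d ^ m := by rw [this]
  rw [hsum, ha', mul_pow, Nat.gcd_mul_right,
    Nat.Coprime.gcd_eq_one (coprime_homogeneous_sum a' b' m hco), one_mul]
end

section
/- Let F be a field and V_1, ..., V_N finite-dimensional subspaces of F^L with V = V_1 + ... + V_N. Let 1 ≤ T < N be an integer. If for every subset Γ ⊆ [N] with |Γ| = T it holds that dim(Σ_{i∈Γ} V_i) = (T/N)·dim V, then N divides dim V, and dim V_i = (dim V)/N for every i ∈ [N]. -/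
open Module Submodule Finset

/-- Submodular key inequality: adding the modules `W j`, `j ∈ B`, to `A` increases the
rank by at most the sum of the individual increases. -/
lemma key_ineq {F : Type*} [Field F] {L : ℕ} {ι : Type*} [DecidableEq ι]
    (A : Submodule F (Fin L → F)) (W : ι → Submodule F (Fin L → F)) (B : Finset ι) :
    finrank F ↥(A ⊔ ⨆ j ∈ B, W j) + B.card * finrank F ↥A
      ≤ finrank F ↥A + ∑ j ∈ B, finrank F ↥(A ⊔ W j) := by
  induction B using Finset.induction_on with
  | empty =>
    have e : (A ⊔ ⨆ j ∈ (∅ : Finset ι), W j) = A := by simp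
    rw [e]
    simp
  | @insert j B hj ih =>
    rw [Finset.iSup_insert, Finset.sum_insert hj, Finset.card_insert_of_notMem hj]
    have h1 : A ⊔ (W j ⊔ ⨆ x ∈ B, W x) = (A ⊔ W j) ⊔ (A ⊔ ⨆ x ∈ B, W x) := by
      rw [← sup_sup_distrib_left]
    have h2 := Submodule.finrank_sup_add_finrank_inf_eq (A ⊔ W j) (A ⊔ ⨆ x ∈ B, W x)
    have h3 : finrank F ↥A ≤ finrank F ↥((A ⊔ W j) ⊓ (A ⊔ ⨆ x ∈ B, W x)) :=
      Submodule.finrank_mono (le_inf le_sup_left le_sup_left)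
    have h4 : (B.card + 1) * finrank F ↥A = B.card * finrank F ↥A + finrank F ↥A := by ring
    rw [h1, h4]
    omega

theorem dvd_dim_and_equal_dims (F : Type*) [Field F] (L N T : ℕ) (hT : 1 ≤ T) (hTN : T < N)
    (V : Fin N → Submodule F (Fin L → F))
    (h : ∀ Γ : Finset (Fin N), Γ.card = T →
      (Module.finrank F ↥(⨆ i ∈ Γ, V i) : ℚ)
        = (T : ℚ) / (N : ℚ) * (Module.finrank F ↥(⨆ i, V i) : ℚ)) :
    N ∣ Module.finrank F ↥(⨆ i, V i) ∧
      ∀ i : Fin N, N * Module.finrank F ↥(V i) = Module.finrank F ↥(⨆ i, V i) := by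
  classical
  set D : ℕ := Module.finrank F ↥(⨆ i, V i) with hD
  have hN : 0 < N := lt_of_le_of_lt (Nat.zero_le T) hTN
  have hNQ : (N : ℚ) ≠ 0 := by positivity
  -- main downward induction:  N · dim(⨆_{i ∈ Γ}) ≤ |Γ| · D  whenever |Γ| + m = T
  have main : ∀ m : ℕ, ∀ Γ : Finset (Fin N), Γ.card + m = T →
      N * finrank F ↥(⨆ i ∈ Γ, V i) ≤ Γ.card * D := by
    intro m
    induction m with
    | zero =>
      intro Γ hΓ
      rw [Nat.add_zero] at hΓ
      have h1 := h Γ hΓ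
      have h2 : (N : ℚ) * (finrank F ↥(⨆ i ∈ Γ, V i) : ℚ) = (T : ℚ) * (D : ℚ) := by
        rw [h1]; field_simp
      have h3 : N * finrank F ↥(⨆ i ∈ Γ, V i) = T * D := by exact_mod_cast h2
      rw [hΓ, h3]
    | succ m ih =>
      intro Γ hΓ
      set k := Γ.card with hk
      set x := finrank F ↥(⨆ i ∈ Γ, V i) with hx
      -- key inequality with A = ⨆ i ∈ Γ, V i and B = Γᶜ
      have hkey := key_ineq (⨆ i ∈ Γ, V i) V Γᶜ
      have hsup : ((⨆ i ∈ Γ, V i) ⊔ ⨆ j ∈ Γᶜ, V j) = ⨆ i, V i := by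
        rw [← Finset.iSup_union, Finset.union_compl]
        simp
      rw [hsup, ← hD, ← hx] at hkey
      have hr : k + Γᶜ.card = N := by
        rw [hk, Finset.card_add_card_compl, Fintype.card_fin]
      set r := Γᶜ.card with hrdef
      -- bound each summand by the inductive hypothesis
      have hterm : ∀ j ∈ Γᶜ, N * finrank F ↥((⨆ i ∈ Γ, V i) ⊔ V j) ≤ (k + 1) * D := by
        intro j hjc
        have hj : j ∉ Γ := Finset.mem_compl.mp hjc
        have hins : (⨆ i ∈ insert j Γ, V i) = (⨆ i ∈ Γ, V i) ⊔ V j := by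
          rw [Finset.iSup_insert, sup_comm]
        have hcard : (insert j Γ).card + m = T := by
          rw [Finset.card_insert_of_notMem hj]
          omega
        have h5 := ih (insert j Γ) hcard
        rw [hins, Finset.card_insert_of_notMem hj] at h5
        exact h5
      -- sum the bounds
      have hsum : ∑ j ∈ Γᶜ, N * finrank F ↥((⨆ i ∈ Γ, V i) ⊔ V j) ≤ r * ((k + 1) * D) := by
        calc ∑ j ∈ Γᶜ, N * finrank F ↥((⨆ i ∈ Γ, V i) ⊔ V j)
            ≤ ∑ _j ∈ Γᶜ, (k + 1) * D := Finset.sum_le_sum hterm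
          _ = r * ((k + 1) * D) := by rw [Finset.sum_const, smul_eq_mul]
      -- multiply key inequality by N
      have hkey2 : N * D + r * (N * x) ≤ N * x + r * ((k + 1) * D) := by
        have h6 := Nat.mul_le_mul_left N hkey
        rw [Nat.mul_add, Nat.mul_add, Finset.mul_sum] at h6
        calc N * D + r * (N * x) = N * D + N * (r * x) := by ring
          _ ≤ N * x + ∑ j ∈ Γᶜ, N * finrank F ↥((⨆ i ∈ Γ, V i) ⊔ V j) := h6
          _ ≤ N * x + r * ((k + 1) * D) := by omega
      -- conclude N * x ≤ k * D
      obtain ⟨s, hs⟩ : ∃ s, r = s + 1 := ⟨r - 1, by omega⟩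
      have hs1 : 1 ≤ s := by omega
      have hNeq : N = k + s + 1 := by omega
      rw [hs] at hkey2
      rw [hNeq] at hkey2 ⊢
      have key3 : s * ((k + s + 1) * x) ≤ s * (k * D) := by nlinarith [hkey2]
      exact Nat.le_of_mul_le_mul_left key3 (by omega)
  -- singletons
  have hsingle : ∀ i : Fin N, N * finrank F ↥(V i) ≤ D := by
    intro i
    have h1 : ({i} : Finset (Fin N)).card + (T - 1) = T := by
      rw [Finset.card_singleton]; omega
    have h2 := main (T - 1) {i} h1
    have hsing : (⨆ j ∈ ({i} : Finset (Fin N)), V j) = V i := by simp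
    rw [hsing, Finset.card_singleton, one_mul] at h2
    exact h2
  -- D ≤ sum of the individual dimensions
  have hsumub : D ≤ ∑ i : Fin N, finrank F ↥(V i) := by
    have hkey := key_ineq (⊥ : Submodule F (Fin L → F)) V Finset.univ
    have e1 : ((⊥ : Submodule F (Fin L → F)) ⊔ ⨆ j ∈ Finset.univ, V j) = ⨆ i, V i := by simp
    have e2 : ∀ j : Fin N, ((⊥ : Submodule F (Fin L → F)) ⊔ V j) = V j := fun j => bot_sup_eq _
    have e3 : ∑ j : Fin N, finrank F ↥((⊥ : Submodule F (Fin L → F)) ⊔ V j)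
        = ∑ j : Fin N, finrank F ↥(V j) :=
      Finset.sum_congr rfl (fun j _ => by rw [e2 j])
    rw [e1, e3, finrank_bot] at hkey
    omega
  -- each singleton achieves equality
  have heq : ∀ i : Fin N, N * finrank F ↥(V i) = D := by
    by_contra hcon
    push_neg at hcon
    obtain ⟨i₀, hi₀⟩ := hcon
    have hlt : N * finrank F ↥(V i₀) < D := lt_of_le_of_ne (hsingle i₀) hi₀
    have hstrict : ∑ i : Fin N, N * finrank F ↥(V i) < ∑ _i : Fin N, D :=
      Finset.sum_lt_sum (fun i _ => hsingle i) ⟨i₀, Finset.mem_univ i₀, hlt⟩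
    rw [Finset.sum_const, smul_eq_mul, Finset.card_univ, Fintype.card_fin,
      ← Finset.mul_sum] at hstrict
    have h7 : N * D ≤ N * ∑ i : Fin N, finrank F ↥(V i) := Nat.mul_le_mul_left N hsumub
    omega
  exact ⟨⟨finrank F ↥(V ⟨0, hN⟩), (heq ⟨0, hN⟩).symm⟩, heq⟩
end

section
/- Let F be a field and V_1, ..., V_N finite-dimensional subspaces of F^L with V = V_1 + ... + V_N, and let 1 ≤ T < N. If for every subset Γ ⊆ [N] with |Γ| = T we have dim(Σ_{i∈Γ} V_i) = (T/N)·dim V, then V is the internal direct sum of V_1, ..., V_N, i.e., Σ_{i=1}^N dim V_i = dim V. -/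
open Module Finset

namespace DSAux

variable {F : Type*} [Field F] {L N : ℕ} (V : Fin N → Submodule F (Fin L → F))

noncomputable def fd (A : Finset (Fin N)) : ℕ := finrank F ↥(⨆ i ∈ A, V i)

lemma fd_mono {A B : Finset (Fin N)} (hAB : A ⊆ B) : fd V A ≤ fd V B :=
  Submodule.finrank_mono (biSup_mono fun i hi => hAB hi)

lemma sup_eq (A B : Finset (Fin N)) :
    (⨆ i ∈ A ∪ B, V i) = (⨆ i ∈ A, V i) ⊔ (⨆ i ∈ B, V i) := by
  simp only [Finset.mem_union, iSup_or, iSup_sup_eq]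

lemma fd_submodular {A B : Finset (Fin N)} (hAB : A ⊆ B) (x : Fin N) :
    fd V (insert x B) + fd V A ≤ fd V B + fd V (insert x A) := by
  have hBI : insert x B = B ∪ insert x A := by
    ext y; simp only [Finset.mem_insert, Finset.mem_union]
    constructor
    · rintro (rfl | hy); · tauto
      · tauto
    · rintro (hy | rfl | hy); · tauto
      · tauto
      · exact Or.inr (hAB hy)
  have key := Submodule.finrank_sup_add_finrank_inf_eq (⨆ i ∈ B, V i) (⨆ i ∈ insert x A, V i)
  have h2 : fd V A ≤ finrank F ↥((⨆ i ∈ B, V i) ⊓ (⨆ i ∈ insert x A, V i)) := by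
    apply Submodule.finrank_mono
    refine le_inf (biSup_mono fun i hi => hAB hi) (biSup_mono fun i hi => Finset.mem_insert_of_mem hi)
  have h1 : fd V (insert x B) = finrank F ↥((⨆ i ∈ B, V i) ⊔ (⨆ i ∈ insert x A, V i)) := by
    rw [fd, hBI, sup_eq]
  unfold fd at *
  omega

lemma fd_union_le (A : Finset (Fin N)) (S : Finset (Fin N)) :
    (fd V (A ∪ S) : ℚ) ≤ fd V A + ∑ j ∈ S, ((fd V (insert j A) : ℚ) - fd V A) := by
  induction S using Finset.induction with
  | empty => simp
  | @insert x S hx ih =>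
    have key := fd_submodular V (Finset.subset_union_left (s₁ := A) (s₂ := S)) x
    have hre : A ∪ insert x S = insert x (A ∪ S) := by
      ext y; simp only [Finset.mem_union, Finset.mem_insert]; tauto
    rw [hre, Finset.sum_insert hx]
    have key' : (fd V (insert x (A ∪ S)) : ℚ) + fd V A ≤ fd V (A ∪ S) + fd V (insert x A) := by
      exact_mod_cast key
    linarith

lemma fd_le_sum (S : Finset (Fin N)) : (fd V S : ℚ) ≤ ∑ j ∈ S, (fd V {j} : ℚ) := by
  induction S using Finset.induction with
  | empty => simp [fd]
  | @insert x S hx ih =>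
    have key := Submodule.finrank_sup_add_finrank_inf_eq (⨆ i ∈ ({x} : Finset (Fin N)), V i) (⨆ i ∈ S, V i)
    have h1 : fd V (insert x S) ≤ fd V {x} + fd V S := by
      have : insert x S = {x} ∪ S := by ext; simp
      rw [fd, this, sup_eq]
      unfold fd; omega
    rw [Finset.sum_insert hx]
    have h1' : (fd V (insert x S) : ℚ) ≤ fd V {x} + fd V S := by exact_mod_cast h1
    linarith

end DSAux

theorem direct_sum_of_equal_partial_dims (F : Type*) [Field F] (L N T : ℕ)
    (hT : 1 ≤ T) (hTN : T < N)
    (V : Fin N → Submodule F (Fin L → F))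
    (h : ∀ Γ : Finset (Fin N), Γ.card = T →
      (Module.finrank F ↥(⨆ i ∈ Γ, V i) : ℚ)
        = (T : ℚ) / (N : ℚ) * (Module.finrank F ↥(⨆ i, V i) : ℚ)) :
    ∑ i : Fin N, Module.finrank F ↥(V i) = Module.finrank F ↥(⨆ i, V i) := by
  classical
  open DSAux in
  set c : ℚ := (Module.finrank F ↥(⨆ i, V i) : ℚ) / N with hc
  have hN0 : (0:ℚ) < N := by
    have : 0 < N := by omega
    exact_mod_cast this
  have hc0 : 0 ≤ c := by positivity
  have hUeq : (⨆ i ∈ (univ : Finset (Fin N)), V i) = ⨆ i, V i := by simp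
  have huniv : fd V (univ : Finset (Fin N)) = Module.finrank F ↥(⨆ i, V i) := by
    rw [fd, hUeq]
  have hfduniv : (fd V (univ : Finset (Fin N)) : ℚ) = c * N := by
    rw [huniv, hc]
    field_simp
  -- downward induction
  have main : ∀ d : ℕ, d ≤ T - 1 → ∀ A : Finset (Fin N), A.card = T - d →
      (fd V A : ℚ) ≤ c * (T - d : ℕ) := by
    intro d
    induction d with
    | zero =>
      intro _ A hA
      simp only [Nat.sub_zero] at hA ⊢
      rw [fd, h A hA, hc]
      exact le_of_eq (by ring)
    | succ d ih =>
      intro hd A hA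
      have hd' : d ≤ T - 1 := by omega
      set K : ℕ := T - (d+1) with hK
      have hK1 : 1 ≤ K := by omega
      have hKd : T - d = K + 1 := by omega
      have hKN : K + 1 < N := by omega
      have hchain := fd_union_le V A Aᶜ
      rw [Finset.union_compl] at hchain
      have hins : ∀ j ∈ Aᶜ, ((fd V (insert j A) : ℚ) - fd V A) ≤ c * (K+1) - fd V A := by
        intro j hj
        have hjA : j ∉ A := Finset.mem_compl.mp hj
        have hcard : (insert j A).card = T - d := by
          rw [Finset.card_insert_of_notMem hjA, hA]; omega
        have := ih hd' (insert j A) hcard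
        rw [hKd] at this
        push_cast at this ⊢
        linarith
      have hsum : ∑ j ∈ Aᶜ, ((fd V (insert j A) : ℚ) - fd V A)
          ≤ (Aᶜ.card : ℚ) * (c * (K+1) - fd V A) := by
        calc ∑ j ∈ Aᶜ, ((fd V (insert j A) : ℚ) - fd V A)
            ≤ ∑ _j ∈ Aᶜ, (c * (K+1) - (fd V A : ℚ)) := Finset.sum_le_sum hins
          _ = (Aᶜ.card : ℚ) * (c * (K+1) - fd V A) := by
              rw [Finset.sum_const, nsmul_eq_mul]
      have hcc : (Aᶜ.card : ℚ) = (N : ℚ) - K := by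
        have : Aᶜ.card = N - K := by
          rw [Finset.card_compl, hA]
          simp [hK]
        rw [this]
        have : (K:ℚ) ≤ N := by exact_mod_cast (by omega : K ≤ N)
        push_cast [Nat.cast_sub (by omega : K ≤ N)]
        ring
      rw [hcc] at hsum
      rw [hfduniv] at hchain
      -- c*N ≤ fd A + (N - K)*(c*(K+1) - fd A)
      have hx : c * N ≤ (fd V A : ℚ) + ((N:ℚ) - K) * (c * (K+1) - fd V A) := by
        linarith
      have hNK : (1:ℚ) ≤ (N:ℚ) - K - 1 := by
        have : (K:ℚ) + 2 ≤ N := by exact_mod_cast (by omega : K + 2 ≤ N)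
        linarith
      have hgoal : (fd V A : ℚ) ≤ c * K := by
        nlinarith [hx, hNK, hc0]
      exact hgoal
  -- single subspaces
  have hsingle : ∀ i : Fin N, (Module.finrank F ↥(V i) : ℚ) ≤ c := by
    intro i
    have h1 : ({i} : Finset (Fin N)).card = T - (T-1) := by simp; omega
    have := main (T-1) (le_refl _) {i} h1
    have hseq : (⨆ j ∈ ({i} : Finset (Fin N)), V j) = V i := by simp
    have heq : fd V ({i} : Finset (Fin N)) = Module.finrank F ↥(V i) := by
      rw [fd, hseq]
    have hT1 : ((T - (T-1) : ℕ) : ℚ) = 1 := by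
      have : T - (T-1) = 1 := by omega
      rw [this]; norm_num
    rw [heq, hT1, mul_one] at this
    exact this
  -- upper bound
  have hupper : ((∑ i : Fin N, Module.finrank F ↥(V i) : ℕ) : ℚ)
      ≤ (Module.finrank F ↥(⨆ i, V i) : ℚ) := by
    push_cast
    calc ∑ i : Fin N, (Module.finrank F ↥(V i) : ℚ) ≤ ∑ _i : Fin N, c :=
          Finset.sum_le_sum fun i _ => hsingle i
      _ = (N:ℚ) * c := by rw [Finset.sum_const, nsmul_eq_mul]; simp
      _ = (Module.finrank F ↥(⨆ i, V i) : ℚ) := by rw [hc]; field_simp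
  -- lower bound
  have hlower : Module.finrank F ↥(⨆ i, V i) ≤ ∑ i : Fin N, Module.finrank F ↥(V i) := by
    have h1 := fd_le_sum V (univ : Finset (Fin N))
    rw [huniv] at h1
    have h2 : ∀ j : Fin N, fd V ({j} : Finset (Fin N)) = Module.finrank F ↥(V j) := by
      intro j
      have hseq : (⨆ k ∈ ({j} : Finset (Fin N)), V k) = V j := by simp
      rw [fd, hseq]
    have h3 : ((Module.finrank F ↥(⨆ i, V i) : ℕ) : ℚ) ≤ ((∑ i : Fin N, Module.finrank F ↥(V i) : ℕ) : ℚ) := by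
      push_cast
      calc (Module.finrank F ↥(⨆ i, V i) : ℚ) ≤ ∑ j : Fin N, (fd V ({j} : Finset (Fin N)) : ℚ) := h1
        _ = ∑ j : Fin N, (Module.finrank F ↥(V j) : ℚ) := by
            exact Finset.sum_congr rfl fun j _ => by rw [h2 j]
    exact_mod_cast h3
  have hupperN : ∑ i : Fin N, Module.finrank F ↥(V i) ≤ Module.finrank F ↥(⨆ i, V i) := by
    exact_mod_cast hupper
  omega
end

section
/- Let F be a field, V_1, ..., V_N finite-dimensional subspaces of F^L with V = V_1 + ... + V_N, 1 ≤ s ≤ T < N integers, and suppose dim(Σ_{i∈Γ} V_i) = (T/N)·dim V for all Γ ⊆ [N] with |Γ| = T. Then for every subset Γ' ⊆ [N] with |Γ'| = s, dim(Σ_{i∈Γ'} V_i) ≤ (T/N)·dim V − (T − s)·⌈(dim V)/N⌉. -/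
/-!
The rank function `f Γ = dim (⨆ i ∈ Γ, V i)` is monotone and submodular. If every `T`-set has
rank `r = (T/N) dim V`, adding the `N - T + 1` missing spaces to a `(T-1)`-set `Δ` one at a time
gains at most `r - f Δ` each, which forces `r - f Δ ≥ dim V / N`, hence `r - f Δ ≥ ⌈dim V / N⌉`.
Submodularity then propagates this deficit downwards: removing one more space from a set of
size at most `T - 1` loses at least as much as removing it from a `(T-1)`-set containing it.
-/

open Module Finset

theorem add_natCeil_div_le_of_add_mul_le {α : Type*} [Field α] [LinearOrder α]
    [IsStrictOrderedRing α] [FloorSemiring α] {a b c n : ℕ} (hn : 0 < n)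
    (h : a + n * b ≤ n * c) : b + ⌈(a : α) / n⌉₊ ≤ c := by
  have hn' : (0 : α) < n := by exact_mod_cast hn
  have h' : (a : α) + n * b ≤ n * c := by exact_mod_cast h
  rw [add_comm, ← Nat.ceil_add_natCast (by positivity), Nat.ceil_le, div_add' _ _ _ hn'.ne',
    div_le_iff₀' hn']
  linarith

section RankFunction

variable {K M ι : Type*} [DivisionRing K] [AddCommGroup M] [Module K M] [FiniteDimensional K M]
  (V : ι → Submodule K M)

theorem finrank_biSup_mono {Γ Δ : Finset ι} (h : Γ ⊆ Δ) :
    finrank K ↥(⨆ i ∈ Γ, V i) ≤ finrank K ↥(⨆ i ∈ Δ, V i) :=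
  Submodule.finrank_mono (biSup_mono fun _ hi => h hi)

variable [DecidableEq ι]

theorem finrank_biSup_insert_add_le {Γ Δ : Finset ι} (h : Γ ⊆ Δ) (j : ι) :
    finrank K ↥(⨆ i ∈ insert j Δ, V i) + finrank K ↥(⨆ i ∈ Γ, V i)
      ≤ finrank K ↥(⨆ i ∈ insert j Γ, V i) + finrank K ↥(⨆ i ∈ Δ, V i) := by
  have hΓ := Submodule.finrank_sup_add_finrank_inf_eq (V j) (⨆ i ∈ Γ, V i)
  have hΔ := Submodule.finrank_sup_add_finrank_inf_eq (V j) (⨆ i ∈ Δ, V i)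
  have hinf : finrank K ↥(V j ⊓ ⨆ i ∈ Γ, V i) ≤ finrank K ↥(V j ⊓ ⨆ i ∈ Δ, V i) :=
    Submodule.finrank_mono (inf_le_inf_left _ (biSup_mono fun _ hi => h hi))
  rw [Finset.iSup_insert, Finset.iSup_insert]
  omega

theorem finrank_biSup_union_le {Δ S : Finset ι} {g : ℕ}
    (h : ∀ i ∈ S, finrank K ↥(⨆ j ∈ insert i Δ, V j) ≤ finrank K ↥(⨆ j ∈ Δ, V j) + g) :
    finrank K ↥(⨆ i ∈ Δ ∪ S, V i) ≤ finrank K ↥(⨆ i ∈ Δ, V i) + #S * g := by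
  induction S using Finset.induction_on with
  | empty => rw [union_empty, card_empty, zero_mul, add_zero]
  | insert j S hj ih =>
    have hstep := finrank_biSup_insert_add_le V (subset_union_left (s₁ := Δ) (s₂ := S)) j
    have hj' := h j (mem_insert_self j S)
    have ih' := ih fun i hi => h i (mem_insert_of_mem hi)
    rw [union_insert, card_insert_of_notMem hj, add_one_mul]
    omega

end RankFunction

section ConstantRankLayer

variable {K M ι : Type*} [DivisionRing K] [AddCommGroup M] [Module K M] [FiniteDimensional K M]
  [Fintype ι] [DecidableEq ι] (V : ι → Submodule K M) {T r : ℕ}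
  (hr : ∀ Γ : Finset ι, #Γ = T → finrank K ↥(⨆ i ∈ Γ, V i) = r)
include hr

theorem finrank_iSup_add_card_mul_le (hT : T < Fintype.card ι)
    (hrank : Fintype.card ι * r = T * finrank K ↥(⨆ i, V i))
    {Δ : Finset ι} (hΔ : #Δ + 1 = T) :
    finrank K ↥(⨆ i, V i) + Fintype.card ι * finrank K ↥(⨆ i ∈ Δ, V i)
      ≤ Fintype.card ι * r := by
  have hinsert : ∀ i ∈ Δᶜ, finrank K ↥(⨆ j ∈ insert i Δ, V j) = r := fun i hi =>
    hr _ (by rw [card_insert_of_notMem (mem_compl.mp hi), hΔ])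
  obtain ⟨g, hg⟩ : ∃ g, r = finrank K ↥(⨆ i ∈ Δ, V i) + g := by
    obtain ⟨i, hi⟩ : Δᶜ.Nonempty := by
      rw [← card_pos, card_compl]
      omega
    exact Nat.exists_eq_add_of_le (hinsert i hi ▸ finrank_biSup_mono V (subset_insert i Δ))
  have hunion := finrank_biSup_union_le V (S := Δᶜ) (g := g) fun i hi =>
    (hinsert i hi).trans_le hg.le
  rw [union_compl, card_compl,
    show ⨆ i ∈ (univ : Finset ι), V i = ⨆ i, V i by simp only [mem_univ, iSup_pos]] at hunion
  obtain ⟨m, hm⟩ : ∃ m, Fintype.card ι = T + (m + 1) := ⟨Fintype.card ι - T - 1, by omega⟩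
  rw [show Fintype.card ι - #Δ = m + 2 by omega] at hunion
  rw [hm, hg] at hrank ⊢
  -- `hunion` times `N = T + (m + 1)`, after substituting `N r = T dim V`, becomes `dim V ≤ N g`
  suffices h : finrank K ↥(⨆ i, V i) ≤ (T + (m + 1)) * g by nlinarith
  refine Nat.le_of_mul_le_mul_left ?_ (Nat.succ_pos m)
  nlinarith [Nat.mul_le_mul_left (T + (m + 1)) hunion]

theorem finrank_biSup_add_mul_le (hT : T ≤ Fintype.card ι) {q : ℕ}
    (hq : ∀ Δ : Finset ι, #Δ + 1 = T → finrank K ↥(⨆ i ∈ Δ, V i) + q ≤ r) (n : ℕ) :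
    ∀ Γ : Finset ι, #Γ + n = T → finrank K ↥(⨆ i ∈ Γ, V i) + n * q ≤ r := by
  induction n with
  | zero => exact fun Γ hΓ => by simpa using (hr Γ hΓ).le
  | succ n ih =>
    intro Γ hΓ
    obtain ⟨i, hi⟩ : Γᶜ.Nonempty := by
      rw [← card_pos, card_compl]
      omega
    have hΓi : Γ ⊆ univ.erase i := fun x hx =>
      mem_erase.mpr ⟨ne_of_mem_of_not_mem hx (mem_compl.mp hi), mem_univ x⟩
    obtain ⟨Δ, hΓΔ, hΔi, hΔ⟩ := exists_subsuperset_card_eq (n := T - 1) hΓi (by omega)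
      (by rw [card_erase_of_mem (mem_univ i), card_univ]; omega)
    have hiΔ : i ∉ Δ := fun h => (mem_erase.mp (hΔi h)).1 rfl
    have hstep := finrank_biSup_insert_add_le V hΓΔ i
    rw [hr _ (by rw [card_insert_of_notMem hiΔ]; omega)] at hstep
    have hΔq := hq Δ (by omega)
    have ih' := ih (insert i Γ) (by rw [card_insert_of_notMem (mem_compl.mp hi)]; omega)
    rw [add_one_mul]
    omega

end ConstantRankLayer

theorem dim_partial_sum_le_general (F : Type*) [Field F] (L N T s : ℕ)
    (hsT : s ≤ T) (hTN : T < N)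
    (V : Fin N → Submodule F (Fin L → F))
    (h : ∀ Γ : Finset (Fin N), Γ.card = T →
      (Module.finrank F ↥(⨆ i ∈ Γ, V i) : ℚ)
        = (T : ℚ) / (N : ℚ) * (Module.finrank F ↥(⨆ i, V i) : ℚ)) :
    ∀ Γ' : Finset (Fin N), Γ'.card = s →
      (Module.finrank F ↥(⨆ i ∈ Γ', V i) : ℚ)
        ≤ (T : ℚ) / (N : ℚ) * (Module.finrank F ↥(⨆ i, V i) : ℚ)
          - ((T : ℚ) - (s : ℚ)) *
            ((⌈(Module.finrank F ↥(⨆ i, V i) : ℚ) / (N : ℚ)⌉ : ℤ) : ℚ) := by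
  intro Γ' hΓ'
  set D := finrank F ↥(⨆ i, V i)
  obtain ⟨Γ₀, -, hΓ₀⟩ := exists_subset_card_eq (s := (univ : Finset (Fin N))) (n := T)
    (by rw [card_univ, Fintype.card_fin]; exact hTN.le)
  set r := finrank F ↥(⨆ i ∈ Γ₀, V i)
  have hr : ∀ Γ : Finset (Fin N), #Γ = T → finrank F ↥(⨆ i ∈ Γ, V i) = r := fun Γ hΓ =>
    by exact_mod_cast (h Γ hΓ).trans (h Γ₀ hΓ₀).symm
  have hrank : Fintype.card (Fin N) * r = T * D := by
    have hr₀ := h Γ₀ hΓ₀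
    rw [div_mul_eq_mul_div, eq_div_iff (by exact_mod_cast (Nat.zero_lt_of_lt hTN).ne')] at hr₀
    rw [Fintype.card_fin]
    exact_mod_cast (mul_comm (N : ℚ) r).trans hr₀
  have hq : ∀ Δ : Finset (Fin N), #Δ + 1 = T →
      finrank F ↥(⨆ i ∈ Δ, V i) + ⌈(D : ℚ) / N⌉₊ ≤ r := fun Δ hΔ => by
    have hD := finrank_iSup_add_card_mul_le V hr (by rwa [Fintype.card_fin]) hrank hΔ
    rw [Fintype.card_fin] at hD
    exact add_natCeil_div_le_of_add_mul_le (by omega) hD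
  have hmain := finrank_biSup_add_mul_le V hr (by rw [Fintype.card_fin]; exact hTN.le) hq
    (T - s) Γ' (by omega)
  rw [← Int.natCast_ceil_eq_ceil (by positivity), ← h Γ₀ hΓ₀, ← Nat.cast_sub hsT,
    le_sub_iff_add_le]
  exact_mod_cast hmain

theorem dim_partial_sum_le (F : Type*) [Field F] (L N T s : ℕ)
    (hs : 1 ≤ s) (hsT : s ≤ T) (hTN : T < N)
    (V : Fin N → Submodule F (Fin L → F))
    (h : ∀ Γ : Finset (Fin N), Γ.card = T →
      (Module.finrank F ↥(⨆ i ∈ Γ, V i) : ℚ)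
        = (T : ℚ) / (N : ℚ) * (Module.finrank F ↥(⨆ i, V i) : ℚ)) :
    ∀ Γ' : Finset (Fin N), Γ'.card = s →
      (Module.finrank F ↥(⨆ i ∈ Γ', V i) : ℚ)
        ≤ (T : ℚ) / (N : ℚ) * (Module.finrank F ↥(⨆ i, V i) : ℚ)
          - ((T : ℚ) - (s : ℚ)) *
            ((⌈(Module.finrank F ↥(⨆ i, V i) : ℚ) / (N : ℚ)⌉ : ℤ) : ℚ) :=
  dim_partial_sum_le_general F L N T s hsT hTN V h
end

section
/- Let N, T, M be positive naturals with 1 ≤ T < N and M ≥ 2, let d = gcd(N, T), n = N/d, t = T/d, and let μ be a positive natural. If N divides μ·n^{M-1} and T divides μ·Σ_{i=1}^{M-1} n^{M-1-i} t^i, then d divides μ; in particular μ·n^{M-1} ≥ d·n^{M-1}. -/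
/-!
Write `N = d n`, `T = d t` with `n, t` coprime and `M = k + 2`. The first hypothesis cancels to
`d ∣ μ n^k`. The sum in the second one is `t · S` with `S = ∑_{j ≤ k} n^(k-j) t^j`, so it cancels
to `d ∣ μ S`. Since `S ≡ t^k (mod n)`, `S` is coprime to `n^k`, and hence `d ∣ μ`.
-/

open Finset

theorem Nat.dvd_of_dvd_mul_of_dvd_mul_of_coprime {d μ a b : ℕ} (hab : a.Coprime b)
    (ha : d ∣ μ * a) (hb : d ∣ μ * b) : d ∣ μ := by
  simpa [Nat.gcd_mul_left, hab] using Nat.dvd_gcd ha hb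

theorem sum_Icc_pow_mul_pow_eq_mul_sum {R : Type*} [CommSemiring R] (x y : R) (k : ℕ) :
    ∑ i ∈ Icc 1 (k + 1), x ^ (k + 1 - i) * y ^ i =
      y * ∑ j ∈ range (k + 1), x ^ (k - j) * y ^ j := by
  rw [← Ico_add_one_right_eq_Icc, sum_Ico_eq_sum_range, mul_sum]
  refine sum_congr rfl fun j _ => ?_
  rw [show k + 1 - (1 + j) = k - j by omega, pow_add]
  ring

theorem sum_range_pow_mul_pow_modEq (n t k : ℕ) :
    ∑ j ∈ range (k + 1), n ^ (k - j) * t ^ j ≡ t ^ k [MOD n] := by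
  have hdvd : n ∣ ∑ j ∈ range k, n ^ (k - j) * t ^ j :=
    dvd_sum fun j hj => (dvd_pow_self n (by simp at hj; omega)).mul_right _
  simpa [sum_range_succ] using (Nat.modEq_zero_iff_dvd.2 hdvd).add_right (t ^ k)

theorem Nat.Coprime.pow_coprime_sum_range_pow_mul_pow {n t : ℕ} (h : n.Coprime t) (a k : ℕ) :
    (n ^ a).Coprime (∑ j ∈ range (k + 1), n ^ (k - j) * t ^ j) := by
  refine Nat.Coprime.pow_left a (Nat.Coprime.symm ?_)
  rw [Nat.Coprime, (sum_range_pow_mul_pow_modEq n t k).gcd_eq]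
  exact (h.pow_right k).symm

theorem d_dvd_mu (N T M : ℕ) (hT : 1 ≤ T) (hTN : T < N) (hM : 2 ≤ M)
    (d n t : ℕ) (hd : d = Nat.gcd N T) (hn : n = N / d) (ht : t = T / d)
    (μ : ℕ) (hμ : 0 < μ)
    (h1 : N ∣ μ * n ^ (M - 1))
    (h2 : T ∣ μ * ∑ i ∈ Finset.Icc 1 (M - 1), n ^ (M - 1 - i) * t ^ i) :
    d ∣ μ ∧ d * n ^ (M - 1) ≤ μ * n ^ (M - 1) := by
  obtain ⟨k, rfl⟩ : ∃ k, M = k + 2 := ⟨M - 2, by omega⟩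
  have hN : N = n * d := by rw [hn, Nat.div_mul_cancel (hd ▸ Nat.gcd_dvd_left N T)]
  have hTt : T = t * d := by rw [ht, Nat.div_mul_cancel (hd ▸ Nat.gcd_dvd_right N T)]
  have hn0 : 0 < n := Nat.pos_of_ne_zero fun h0 => by simp [h0] at hN; omega
  have ht0 : 0 < t := Nat.pos_of_ne_zero fun h0 => by simp [h0] at hTt; omega
  have hcop : n.Coprime t :=
    hn ▸ ht ▸ hd ▸ Nat.coprime_div_gcd_div_gcd (Nat.gcd_pos_of_pos_right N hT)
  have hd_dvd_pow : d ∣ μ * n ^ k := by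
    rw [hN, show k + 2 - 1 = k + 1 from rfl, pow_succ', mul_left_comm] at h1
    exact Nat.dvd_of_mul_dvd_mul_left hn0 h1
  have hd_dvd_sum : d ∣ μ * ∑ j ∈ range (k + 1), n ^ (k - j) * t ^ j := by
    rw [hTt, show k + 2 - 1 = k + 1 from rfl, sum_Icc_pow_mul_pow_eq_mul_sum, mul_left_comm] at h2
    exact Nat.dvd_of_mul_dvd_mul_left ht0 h2
  have hdμ : d ∣ μ := Nat.dvd_of_dvd_mul_of_dvd_mul_of_coprime
    (hcop.pow_coprime_sum_range_pow_mul_pow k k) hd_dvd_pow hd_dvd_sum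
  exact ⟨hdμ, Nat.mul_le_mul_right _ (Nat.le_of_dvd hμ hdμ)⟩
end

section
/- Let N, T, M be naturals with M ≥ 2 and T < N, d = gcd(N,T), n = N/d, t = T/d, and for 1 ≤ k ≤ M define (over ℚ or ℤ) α_k = ((n−t)^{k-2} − (−t)^{k-2})·(n−t)·t^{M-k}/n and β_k = ((n−t)^{k-1} − (−t)^{k-1})·t^{M-k}/n. Then for all 1 ≤ k < M: T·α_{k+1} = (N−T)·β_k and α_k + α_{k+1} = β_k + β_{k+1}. -/
theorem alpha_beta_recursions (N T M : ℕ) (hM : 2 ≤ M) (hT : 0 < T) (hTN : T < N)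
    (d n t : ℕ) (hd : d = Nat.gcd N T) (hn : n = N / d) (ht : t = T / d)
    (α β : ℕ → ℚ)
    (hα : ∀ k, 1 ≤ k → k ≤ M →
      α k = (((n : ℚ) - t) ^ ((k : ℤ) - 2) - (-(t : ℚ)) ^ ((k : ℤ) - 2))
              * ((n : ℚ) - t) * (t : ℚ) ^ (M - k) / (n : ℚ))
    (hβ : ∀ k, 1 ≤ k → k ≤ M →
      β k = (((n : ℚ) - t) ^ ((k : ℤ) - 1) - (-(t : ℚ)) ^ ((k : ℤ) - 1))
              * (t : ℚ) ^ (M - k) / (n : ℚ)) :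
    ∀ k, 1 ≤ k → k < M →
      (T : ℚ) * α (k + 1) = ((N : ℚ) - (T : ℚ)) * β k ∧
      α k + α (k + 1) = β k + β (k + 1) := by
  intro k hk1 hkM
  have hdN : d ∣ N := hd ▸ Nat.gcd_dvd_left N T
  have hdT : d ∣ T := hd ▸ Nat.gcd_dvd_right N T
  have hN : N = d * n := by rw [hn, Nat.mul_div_cancel' hdN]
  have hT' : T = d * t := by rw [ht, Nat.mul_div_cancel' hdT]
  have ht0 : 0 < t := by
    rcases Nat.eq_zero_or_pos t with h | h
    · subst h; simp at hT'; omega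
    · exact h
  have htn : t < n := by
    have h2 : d * t < d * n := by rw [← hN, ← hT']; exact hTN
    exact Nat.lt_of_mul_lt_mul_left h2
  have hnQ : (n : ℚ) ≠ 0 := Nat.cast_ne_zero.mpr (by omega)
  have htQ : (t : ℚ) ≠ 0 := Nat.cast_ne_zero.mpr (by omega)
  have haQ : ((n : ℚ) - t) ≠ 0 := by
    have : (t : ℚ) < n := by exact_mod_cast htn
    exact sub_ne_zero.mpr (ne_of_gt this)
  have hbQ : (-(t : ℚ)) ≠ 0 := by simpa using htQ
  have hMk : M - k = (M - (k + 1)) + 1 := by omega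
  have hαk := hα k hk1 (le_of_lt hkM)
  have hαk1 := hα (k + 1) (by omega) (by omega)
  have hβk := hβ k hk1 (le_of_lt hkM)
  have hβk1 := hβ (k + 1) (by omega) (by omega)
  have e1 : ((k + 1 : ℕ) : ℤ) - 2 = ((k : ℤ) - 2) + 1 := by push_cast; ring
  have e2 : ((k + 1 : ℕ) : ℤ) - 1 = ((k : ℤ) - 2) + 1 + 1 := by push_cast; ring
  have e3 : (k : ℤ) - 1 = ((k : ℤ) - 2) + 1 := by ring
  rw [e1] at hαk1
  rw [e3] at hβk
  rw [e2] at hβk1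
  rw [zpow_add_one₀ haQ, zpow_add_one₀ hbQ] at hαk1 hβk hβk1
  rw [zpow_add_one₀ haQ, zpow_add_one₀ hbQ] at hβk1
  rw [hMk, pow_succ] at hαk hβk
  set x := ((n : ℚ) - t) ^ ((k : ℤ) - 2) with hx
  set y := (-(t : ℚ)) ^ ((k : ℤ) - 2) with hy
  have hNQ : (N : ℚ) = (d : ℚ) * n := by exact_mod_cast congrArg (Nat.cast : ℕ → ℚ) hN
  have hTQ : (T : ℚ) = (d : ℚ) * t := by exact_mod_cast congrArg (Nat.cast : ℕ → ℚ) hT'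
  constructor
  · rw [hαk1, hβk, hNQ, hTQ]
    field_simp
  · rw [hαk, hαk1, hβk, hβk1]
    field_simp
    ring
end

section
/- Let N, T, M be naturals with M ≥ 2, T < N, d = gcd(N,T), n = N/d, t = T/d, and let α_k = ((n−t)^{k-2} − (−t)^{k-2})·(n−t)·t^{M-k}/n, β_k = ((n−t)^{k-1} − (−t)^{k-1})·t^{M-k}/n for 1 ≤ k ≤ M. Then for every 1 ≤ k ≤ M: T·α_k + (N−T)·β_k = d·(n−t)^{k-1}·t^{M-k}. -/
theorem total_ksum_count (N T M : ℕ) (hM : 2 ≤ M) (hT : 0 < T) (hTN : T < N)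
    (d n t : ℕ) (hd : d = Nat.gcd N T) (hn : n = N / d) (ht : t = T / d)
    (α β : ℕ → ℚ)
    (hα : ∀ k, 1 ≤ k → k ≤ M →
      α k = (((n : ℚ) - t) ^ ((k : ℤ) - 2) - (-(t : ℚ)) ^ ((k : ℤ) - 2))
              * ((n : ℚ) - t) * (t : ℚ) ^ (M - k) / (n : ℚ))
    (hβ : ∀ k, 1 ≤ k → k ≤ M →
      β k = (((n : ℚ) - t) ^ ((k : ℤ) - 1) - (-(t : ℚ)) ^ ((k : ℤ) - 1))
              * (t : ℚ) ^ (M - k) / (n : ℚ)) :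
    ∀ k, 1 ≤ k → k ≤ M →
      (T : ℚ) * α k + ((N : ℚ) - (T : ℚ)) * β k
        = (d : ℚ) * ((n : ℚ) - (t : ℚ)) ^ (k - 1) * (t : ℚ) ^ (M - k) := by
  intro k hk1 hkM
  have hdN : d ∣ N := hd ▸ Nat.gcd_dvd_left N T
  have hdT : d ∣ T := hd ▸ Nat.gcd_dvd_right N T
  have hd0 : 0 < d := hd ▸ Nat.gcd_pos_of_pos_right N hT
  have hN : N = d * n := by rw [hn, Nat.mul_div_cancel' hdN]
  have hTt : T = d * t := by rw [ht, Nat.mul_div_cancel' hdT]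
  have ht0 : 0 < t := by
    rcases Nat.eq_zero_or_pos t with h | h
    · simp [h] at hTt; omega
    · exact h
  have htn : t < n := by
    by_contra h
    push_neg at h
    have : N ≤ T := by rw [hN, hTt]; exact Nat.mul_le_mul_left d h
    omega
  have hn0 : 0 < n := lt_trans ht0 htn
  have hnQ : (n : ℚ) ≠ 0 := Nat.cast_ne_zero.mpr hn0.ne'
  have htQ : (t : ℚ) ≠ 0 := Nat.cast_ne_zero.mpr ht0.ne'
  have hxQ : (n : ℚ) - t ≠ 0 := by
    have : (t : ℚ) < n := by exact_mod_cast htn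
    linarith
  obtain ⟨j, rfl⟩ : ∃ j, k = j + 1 := ⟨k - 1, by omega⟩
  rw [hα _ hk1 hkM, hβ _ hk1 hkM]
  have e2 : ((j + 1 : ℕ) : ℤ) - 2 = (j : ℤ) - 1 := by push_cast; ring
  have e1 : ((j + 1 : ℕ) : ℤ) - 1 = (j : ℤ) := by push_cast; ring
  rw [e2, e1]
  have hz1 : ∀ x : ℚ, x ≠ 0 → x ^ ((j : ℤ) - 1) = x ^ j / x := by
    intro x hx
    rw [zpow_sub_one₀ hx, zpow_natCast]
    rfl
  rw [hz1 _ hxQ, hz1 _ (neg_ne_zero.mpr htQ), zpow_natCast, zpow_natCast]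
  have hNQ : (N : ℚ) = (d : ℚ) * n := by exact_mod_cast congrArg (Nat.cast : ℕ → ℚ) hN
  have hTQ : (T : ℚ) = (d : ℚ) * t := by exact_mod_cast congrArg (Nat.cast : ℕ → ℚ) hTt
  rw [hNQ, hTQ]
  simp only [Nat.add_sub_cancel]
  rcases Nat.eq_zero_or_pos j with rfl | hj
  · norm_num
    field_simp [htQ, hnQ, hxQ]
    ring
  · obtain ⟨i, rfl⟩ : ∃ i, j = i + 1 := ⟨j - 1, by omega⟩
    have h1 : ((n : ℚ) - t) ^ (i + 1) / ((n : ℚ) - t) = ((n : ℚ) - t) ^ i := by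
      rw [pow_succ, mul_div_assoc, div_self hxQ, mul_one]
    have h2 : (-(t : ℚ)) ^ (i + 1) / (-(t : ℚ)) = (-(t : ℚ)) ^ i := by
      rw [pow_succ, mul_div_assoc, div_self (neg_ne_zero.mpr htQ), mul_one]
    rw [h1, h2]
    field_simp [htQ, hnQ, hxQ]
    ring
end

section
/- Let F be a field, V_1, ..., V_N finite-dimensional subspaces of a vector space over F, and 1 ≤ T ≤ N. Then (1 / C(N,T)) · Σ_{Γ ⊆ [N], |Γ| = T} dim(Σ_{i∈Γ} V_i) ≥ (T/N) · dim(Σ_{i=1}^N V_i). -/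
/-!
Fix any linear order on the index set. For a submodular set function `f`, the increments
`g j = f {i ≤ j} - f {i < j}` telescope to `f univ - f ∅`, and by diminishing returns the
increments of `f` along the elements of any `Γ` dominate them, so
`∑ j ∈ Γ, g j ≤ f Γ - f ∅`.
Summing over all `T`-subsets `Γ` counts each `j` exactly `C(N-1, T-1) = (T/N) C(N, T)` times.
The rank function `S ↦ dim (∑ i ∈ S, V i)` is submodular by the dimension formula
`dim (A + B) + dim (A ∩ B) = dim A + dim B`.
-/

open Finset Module

section

variable {ι M : Type*}

def IsSubmodular [DecidableEq ι] [Add M] [LE M] (f : Finset ι → M) : Prop :=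
  ∀ A B, f (A ∪ B) + f (A ∩ B) ≤ f A + f B

theorem Finset.sum_sub_filter_lt_eq_sub [LinearOrder ι] [DecidableEq ι] [AddCommGroup M]
    (f : Finset ι → M) (s : Finset ι) :
    ∑ j ∈ s, (f (insert j {i ∈ s | i < j}) - f {i ∈ s | i < j}) = f s - f ∅ := by
  induction s using Finset.induction_on_max with
  | empty => simp
  | insert a s ha ih =>
    have has : a ∉ s := fun h => lt_irrefl a (ha a h)
    have hlt_a : {i ∈ insert a s | i < a} = s := by
      ext i; have := ha i; grind
    have hlt_j : ∀ j ∈ s, {i ∈ insert a s | i < j} = {i ∈ s | i < j} := by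
      intro j hj; ext i; have := ha j hj; grind
    rw [sum_insert has, hlt_a, sum_congr rfl fun j hj => by rw [hlt_j j hj], ih]
    abel

theorem Finset.sum_powersetCard_sum_eq_choose_smul [DecidableEq ι] [AddCommMonoid M]
    (s : Finset ι) (g : ι → M) {T : ℕ} (hT : 1 ≤ T) :
    ∑ Γ ∈ s.powersetCard T, ∑ j ∈ Γ, g j = (#s - 1).choose (T - 1) • ∑ j ∈ s, g j := by
  rw [sum_comm' (t' := s) (s' := fun j => {Γ ∈ s.powersetCard T | {j} ⊆ Γ})
    (by
      intro Γ j
      simp only [mem_filter, mem_powersetCard, singleton_subset_iff]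
      grind),
    smul_sum]
  refine sum_congr rfl fun j hj => ?_
  rw [sum_const, card_filter_powersetCard_subset _ _ _ (singleton_subset_iff.2 hj) hT,
    card_singleton]

theorem Nat.cast_div_eq_choose_div_choose {K : Type*} [Field K] [CharZero K] {n k : ℕ}
    (hk : 1 ≤ k) (hkn : k ≤ n) :
    (k : K) / n = (n - 1).choose (k - 1) / n.choose k := by
  obtain ⟨n, rfl⟩ : ∃ m, n = m + 1 := ⟨n - 1, by omega⟩
  obtain ⟨k, rfl⟩ : ∃ m, k = m + 1 := ⟨k - 1, by omega⟩
  rw [div_eq_div_iff (Nat.cast_ne_zero.2 n.succ_ne_zero)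
    (Nat.cast_ne_zero.2 (Nat.choose_pos hkn).ne'), Nat.add_sub_cancel, Nat.add_sub_cancel,
    mul_comm, mul_comm (n.choose k : K)]
  exact_mod_cast (Nat.add_one_mul_choose_eq n k).symm

namespace IsSubmodular

variable [DecidableEq ι] [AddCommGroup M] [PartialOrder M] [IsOrderedAddMonoid M]
  {f : Finset ι → M}

theorem sub_le_sub_of_subset (hf : IsSubmodular f) {A B : Finset ι} {j : ι}
    (hAB : A ⊆ B) (hj : j ∉ B) :
    f (insert j B) - f B ≤ f (insert j A) - f A := by
  have h := hf (insert j A) B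
  rwa [insert_union, union_eq_right.2 hAB, insert_inter_of_notMem hj, inter_eq_left.2 hAB,
    ← sub_le_sub_iff] at h

theorem choose_smul_le_sum_powersetCard [Fintype ι] (hf : IsSubmodular f) {T : ℕ}
    (hT : 1 ≤ T) :
    (Fintype.card ι - 1).choose (T - 1) • (f univ - f ∅)
      ≤ ∑ Γ ∈ powersetCard T univ, (f Γ - f ∅) := by
  let _ : LinearOrder ι := LinearOrder.lift' _ (Fintype.equivFin ι).injective
  set g : ι → M := fun j => f (insert j ({i | i < j} : Finset ι)) - f {i | i < j}
  have hΓ : ∀ Γ : Finset ι, ∑ j ∈ Γ, g j ≤ f Γ - f ∅ := fun Γ => by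
    rw [← sum_sub_filter_lt_eq_sub f Γ]
    exact sum_le_sum fun j _ =>
      hf.sub_le_sub_of_subset (filter_subset_filter _ (subset_univ Γ)) (by simp)
  calc (Fintype.card ι - 1).choose (T - 1) • (f univ - f ∅)
      = ∑ Γ ∈ powersetCard T univ, ∑ j ∈ Γ, g j := by
        rw [sum_powersetCard_sum_eq_choose_smul _ _ hT, card_univ,
          ← sum_sub_filter_lt_eq_sub f univ]
    _ ≤ ∑ Γ ∈ powersetCard T univ, (f Γ - f ∅) := sum_le_sum fun Γ _ => hΓ Γ

end IsSubmodular

theorem Submodule.isSubmodular_finrank_finset_sup {F W R : Type*} [Field F] [AddCommGroup W]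
    [Module F W] [Ring R] [PartialOrder R] [IsOrderedRing R] [DecidableEq ι]
    (V : ι → Submodule F W) [∀ i, FiniteDimensional F (V i)] :
    IsSubmodular fun S : Finset ι => (finrank F ↥(S.sup V) : R) := by
  intro A B
  have hmod := Submodule.finrank_sup_add_finrank_inf_eq (A.sup V) (B.sup V)
  have hinter : finrank F ↥((A ∩ B).sup V) ≤ finrank F ↥(A.sup V ⊓ B.sup V) :=
    Submodule.finrank_mono (le_inf (sup_mono inter_subset_left) (sup_mono inter_subset_right))
  dsimp only
  rw [sup_union]
  have h : finrank F ↥(A.sup V ⊔ B.sup V) + finrank F ↥((A ∩ B).sup V)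
      ≤ finrank F ↥(A.sup V) + finrank F ↥(B.sup V) := by omega
  exact_mod_cast Nat.mono_cast (α := R) h

end

theorem dim_han_inequality (F : Type*) [Field F] (W : Type*) [AddCommGroup W] [Module F W]
    (N T : ℕ) (hT : 1 ≤ T) (hTN : T ≤ N)
    (V : Fin N → Submodule F W) (hfd : ∀ i, FiniteDimensional F ↥(V i)) :
    (T : ℚ) / (N : ℚ) * (Module.finrank F ↥(⨆ i, V i) : ℚ)
      ≤ (1 / (Nat.choose N T : ℚ)) *
          ∑ Γ ∈ Finset.powersetCard T (Finset.univ : Finset (Fin N)),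
            (Module.finrank F ↥(⨆ i ∈ Γ, V i) : ℚ) := by
  have han :=
    (Submodule.isSubmodular_finrank_finset_sup (R := ℚ) V).choose_smul_le_sum_powersetCard hT
  rw [Finset.sup_empty, finrank_bot, Nat.cast_zero, Fintype.card_fin, nsmul_eq_mul] at han
  simp only [sub_zero] at han
  rw [← Finset.sup_univ_eq_iSup, sum_congr rfl fun Γ _ => by rw [← Finset.sup_eq_iSup],
    Nat.cast_div_eq_choose_div_choose hT hTN, div_mul_eq_mul_div, one_div_mul_eq_div]
  exact div_le_div_of_nonneg_right han (Nat.cast_nonneg _)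
end

section
/- Let N, T be positive naturals with T < N, d = gcd(N,T), n = N/d, t = T/d, and M ≥ 2. If L and D are positive naturals with L·(n^M − t^M) = D·n^{M-1}·(n − t), N | L, and T | (D − L) (with D ≥ L), then L ≥ d·n^{M-1}. -/
/-!
Write `S = ∑_{i ≤ m} n^i t^(m-i)`, so that `n^(m+1) - t^(m+1) = S (n - t)` with `M = m + 1`, and the
capacity equation becomes `L S = D n^m`. Since `S ≡ t^m (mod n)` is coprime to `n`, this forces
`L = c n^m` and `D = c S` with `c = gcd L D`. Now `d ∣ N ∣ L` and `d ∣ T ∣ D - L` give `d ∣ L` and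
`d ∣ D`, hence `d ∣ c` and `L = c n^m ≥ d n^m`.
-/

open Finset

theorem Nat.Coprime.coprime_geom_sum₂ {n t : ℕ} (h : n.Coprime t) (m : ℕ) :
    n.Coprime (∑ i ∈ range (m + 1), n ^ i * t ^ (m - i)) := by
  have hsplit : ∑ i ∈ range (m + 1), n ^ i * t ^ (m - i)
      = n * ∑ i ∈ range m, n ^ i * t ^ (m - (i + 1)) + t ^ m := by
    rw [sum_range_succ', mul_sum]
    simp only [pow_succ', mul_assoc, pow_zero, one_mul, Nat.sub_zero]
  rw [hsplit, Nat.coprime_mul_left_add_right]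
  exact h.pow_right m

theorem Nat.gcd_mul_eq_of_mul_eq_mul {a b r s : ℕ} (hrs : r.Coprime s) (h : a * s = b * r) :
    Nat.gcd a b * r = a := by
  obtain ⟨c, rfl⟩ : r ∣ a := hrs.dvd_of_dvd_mul_right ⟨b, by rw [h, mul_comm]⟩
  rcases Nat.eq_zero_or_pos r with hr | hr
  · simp [hr]
  have hb : b = c * s := by
    apply Nat.eq_of_mul_eq_mul_left hr
    rw [mul_comm r b, ← h]
    ring
  rw [hb, mul_comm r c, Nat.gcd_mul_left, hrs.gcd_eq_one, mul_one]

theorem gcd_mul_pow_eq_of_mul_sub_pow_eq {n t L D m : ℕ} (hnt : n.Coprime t) (htn : t < n)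
    (h : L * (n ^ (m + 1) - t ^ (m + 1)) = D * n ^ m * (n - t)) :
    Nat.gcd L D * n ^ m = L := by
  set S := ∑ i ∈ range (m + 1), n ^ i * t ^ (m - i)
  have hgeom : n ^ (m + 1) - t ^ (m + 1) = S * (n - t) := by
    rw [← geom_sum₂_mul_of_ge htn.le]
    simp only [Nat.add_sub_cancel, S]
  have hLS : L * S = D * n ^ m := by
    apply Nat.eq_of_mul_eq_mul_right (Nat.sub_pos_of_lt htn)
    rw [mul_assoc, ← hgeom, h]
  exact Nat.gcd_mul_eq_of_mul_eq_mul ((hnt.coprime_geom_sum₂ m).pow_left m) hLS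

theorem subpacketization_lower_bound_general (N T M : ℕ) (hTN : T < N) (hM : 2 ≤ M)
    (d n t : ℕ) (hd : d = Nat.gcd N T) (hn : n = N / d) (ht : t = T / d)
    (L D : ℕ) (hL : 0 < L) (hDL : L ≤ D)
    (hcap : L * (n ^ M - t ^ M) = D * n ^ (M - 1) * (n - t))
    (hNL : N ∣ L) (hTDL : T ∣ (D - L)) :
    d * n ^ (M - 1) ≤ L := by
  obtain ⟨m, rfl⟩ : ∃ m, M = m + 1 := ⟨M - 1, by omega⟩
  have hd0 : 0 < d := hd ▸ Nat.gcd_pos_of_pos_left T (by omega)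
  have hdN : d ∣ N := hd ▸ Nat.gcd_dvd_left N T
  have hdT : d ∣ T := hd ▸ Nat.gcd_dvd_right N T
  have htn : t < n := by
    rw [hn, ht]
    exact Nat.div_lt_div_of_lt_of_dvd hdN hTN
  have hnt : n.Coprime t := hn ▸ ht ▸ hd ▸ Nat.coprime_div_gcd_div_gcd (hd ▸ hd0)
  have hdL : d ∣ L := hdN.trans hNL
  have hdD : d ∣ D := (Nat.dvd_sub_iff_left hDL hdL).mp (hdT.trans hTDL)
  calc d * n ^ (m + 1 - 1)
      ≤ Nat.gcd L D * n ^ m := Nat.mul_le_mul_right _ <|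
        Nat.le_of_dvd (Nat.gcd_pos_of_pos_left D hL) (Nat.dvd_gcd hdL hdD)
    _ = L := gcd_mul_pow_eq_of_mul_sub_pow_eq hnt htn hcap

theorem subpacketization_lower_bound (N T M : ℕ) (hT : 0 < T) (hTN : T < N) (hM : 2 ≤ M)
    (d n t : ℕ) (hd : d = Nat.gcd N T) (hn : n = N / d) (ht : t = T / d)
    (L D : ℕ) (hL : 0 < L) (hD : 0 < D) (hDL : L ≤ D)
    (hcap : L * (n ^ M - t ^ M) = D * n ^ (M - 1) * (n - t))
    (hNL : N ∣ L) (hTDL : T ∣ (D - L)) :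
    d * n ^ (M - 1) ≤ L :=
  subpacketization_lower_bound_general N T M hTN hM d n t hd hn ht L D hL hDL hcap hNL hTDL
end
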